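/- Let u, v ∈ ℂ be linearly independent over ℝ with Im(uv) ≠ 0, and set x = (Re u, −Im u) and y = (Re v, −Im v) in ℝ². If α > 0 is a real number with ‖T_α x‖ = ‖T_α y‖, then the cosine of the angle between T_α x and T_α y satisfies ⟨T_α x, T_α y⟩/(‖T_α x‖·‖T_α y‖) = (Im(u²) + Im(v²))/(2·Im(uv)). -/

import Mathlib

open scoped RealInnerProductSpace

noncomputable section

/-- `ℝ²` with the Euclidean inner product and norm. -/
abbrev E2 : Type := EuclideanSpace ℝ (Fin 2)

/-- The vector `(a, b) ∈ ℝ²`. -/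
def v2 (a b : ℝ) : E2 := WithLp.toLp 2 ![a, b]

/-- The lattice `ℤx + ℤy`. -/
def latticeOf (x y : E2) : Set E2 := {z | ∃ m n : ℤ, z = m • x + n • y}

/-- `{x, y}` is a basis of the lattice `Λ`. -/
def IsBasisOf (x y : E2) (Λ : Set E2) : Prop :=
  LinearIndependent ℝ ![x, y] ∧ Λ = latticeOf x y

/-- `Λ` is a full-rank lattice of `ℝ²`. -/
def IsLattice (Λ : Set E2) : Prop := ∃ x y : E2, IsBasisOf x y Λ

/-- `Λ₁ ∼ Λ₂`: there are `α > 0` and an orthogonal transformation `U` with `Λ₂ = αUΛ₁`. -/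
def LatticeSimilar (Λ₁ Λ₂ : Set E2) : Prop :=
  ∃ α : ℝ, 0 < α ∧ ∃ U : (E2 ≃ₗᵢ[ℝ] E2), Λ₂ = (fun w => α • U w) '' Λ₁

/-- Cosine of the angle between `x` and `y`. -/
def cosAngle (x y : E2) : ℝ := ⟪x, y⟫ / (‖x‖ * ‖y‖)

/-- The twist map `T_α = diag(α, 1/α)`. -/
def Tmap (α : ℝ) : E2 → E2 := fun w => v2 (α * w 0) (w 1 / α)

lemma inner_v2 (a b c d : ℝ) : ⟪v2 a b, v2 c d⟫ = a * c + b * d := by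
  simp [v2, PiLp.inner_apply, Fin.sum_univ_two]
  ring

lemma norm_v2_sq (a b : ℝ) : ‖v2 a b‖ ^ 2 = a ^ 2 + b ^ 2 := by
  rw [← real_inner_self_eq_norm_sq, inner_v2]
  ring

lemma Tmap_v2 (α a b : ℝ) : Tmap α (v2 a b) = v2 (α * a) (b / α) := by
  simp [Tmap, v2]

lemma cosAngle_of_norm_eq {x y : E2} (h : ‖x‖ = ‖y‖) : cosAngle x y = ⟪x, y⟫ / ‖x‖ ^ 2 := by
  rw [cosAngle, ← h, sq]

/-- With `‖T_α(a, b)‖² = ‖T_α(c, d)‖² =: N`, the `α`-dependence cancels because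
`(a b + c d) N` may be expanded using the first form of `N` for `c d` and the second for `a b`. -/
lemma cosAngle_Tmap_v2_of_norm_eq {α : ℝ} (hα : α ≠ 0) {a b c d : ℝ} (hden : a * d + b * c ≠ 0)
    (h : ‖Tmap α (v2 a b)‖ = ‖Tmap α (v2 c d)‖) :
    cosAngle (Tmap α (v2 a b)) (Tmap α (v2 c d)) = (a * b + c * d) / (a * d + b * c) := by
  rw [cosAngle_of_norm_eq h]
  rw [Tmap_v2, Tmap_v2] at h ⊢
  have hsq : (α * a) ^ 2 + (b / α) ^ 2 = (α * c) ^ 2 + (d / α) ^ 2 := by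
    rw [← norm_v2_sq, ← norm_v2_sq, h]
  have hab : a ≠ 0 ∨ b ≠ 0 := by
    by_contra! h0
    exact hden (by rw [h0.1, h0.2]; ring)
  have hN : (α * a) ^ 2 + (b / α) ^ 2 ≠ 0 := by
    rcases hab with ha | hb <;> positivity
  rw [inner_v2, norm_v2_sq, div_eq_div_iff hN hden]
  field_simp at hsq ⊢
  linear_combination (-a * b) * hsq

theorem stmt_7_general (u v : ℂ) (him : (u * v).im ≠ 0)
    (α : ℝ) (hα : 0 < α)
    (heq : ‖Tmap α (v2 u.re (-u.im))‖ = ‖Tmap α (v2 v.re (-v.im))‖) :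
    cosAngle (Tmap α (v2 u.re (-u.im))) (Tmap α (v2 v.re (-v.im))) =
      ((u ^ 2).im + (v ^ 2).im) / (2 * (u * v).im) := by
  rw [Complex.mul_im] at him
  have hden : u.re * -v.im + -u.im * v.re ≠ 0 := by
    contrapose! him
    linear_combination -him
  rw [cosAngle_Tmap_v2_of_norm_eq hα.ne' hden heq, sq, sq, Complex.mul_im, Complex.mul_im,
    Complex.mul_im, div_eq_div_iff hden (mul_ne_zero two_ne_zero him)]
  ring

/-- For `u, v ∈ ℂ` embedded as `(Re w, -Im w)` and a twisting parameter `α`, the cosine of the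
angle of the twisted basis equals `(Im u² + Im v²)/(2 Im(uv))`. -/
theorem stmt_7 (u v : ℂ) (hli : LinearIndependent ℝ ![u, v]) (him : (u * v).im ≠ 0)
    (α : ℝ) (hα : 0 < α)
    (heq : ‖Tmap α (v2 u.re (-u.im))‖ = ‖Tmap α (v2 v.re (-v.im))‖) :
    cosAngle (Tmap α (v2 u.re (-u.im))) (Tmap α (v2 v.re (-v.im))) =
      ((u ^ 2).im + (v ^ 2).im) / (2 * (u * v).im) :=
  stmt_7_general u v him α hα heq
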